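/- arXiv:math-ph/0610059 — 2 statements merged into one kernel-verified Lean document; each statement's English description precedes it below -/
import Mathlib

section
/- Define the contact bracket of homogeneous superfunctions by {f,g} = f g′ − f′ g + (−1)^{p(f)(p(g)+1)} (1/2) D(f) D(g). Then for all homogeneous superfunctions f, g one has the supercommutator identity [X_f, X_g] = X_{{f,g}}, where X_f = −f D̄² + (1/2) D(f) D̄. -/
/-- A superfunction `f(x,ξ) = f₀(x) + ξ f₁(x)` on `S^{1|1}`, encoded as the pair `(f₀, f₁)`. -/
abbrev SF : Type := (ℝ → ℂ) × (ℝ → ℂ)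

namespace SF

/-- The odd derivation `D̄ = ∂/∂ξ - ξ ∂/∂x`. -/
noncomputable def Dbar (f : SF) : SF := (f.2, fun x => -deriv f.1 x)

/-- The odd derivation `D = ∂/∂ξ + ξ ∂/∂x`. -/
noncomputable def Dop (f : SF) : SF := (f.2, fun x => deriv f.1 x)

/-- The even derivation `∂/∂x`, i.e. `f ↦ f′`. -/
noncomputable def dx (f : SF) : SF := (fun x => deriv f.1 x, fun x => deriv f.2 x)

/-- The odd derivation `∂/∂ξ`. -/
def dxi (f : SF) : SF := (f.2, 0)

/-- Product of superfunctions: `(f₀ + ξf₁)(g₀ + ξg₁) = f₀g₀ + ξ(f₀g₁ + f₁g₀)`. -/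
def mul (f g : SF) : SF := (f.1 * g.1, f.1 * g.2 + f.2 * g.1)

/-- The odd coordinate `ξ` as a superfunction. -/
def xi : SF := (0, fun _ => 1)

/-- The even coordinate `x` as a superfunction. -/
def xc : SF := (fun x => (x : ℂ), 0)

/-- `x²` as a superfunction. -/
def xc2 : SF := (fun x => (x : ℂ)^2, 0)

/-- `xξ` as a superfunction. -/
def xxi : SF := (0, fun x => (x : ℂ))

/-- The constant superfunction `1`. -/
def one : SF := (fun _ => 1, 0)

/-- `f` is even: `f = f₀(x)`. -/
def IsEven (f : SF) : Prop := f.2 = 0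

/-- `f` is odd: `f = ξ f₁(x)`. -/
def IsOdd (f : SF) : Prop := f.1 = 0

/-- `f` is homogeneous of parity `p` (`p = 0` even, `p = 1` odd). -/
def Homog (f : SF) (p : ℕ) : Prop := (p = 0 ∧ IsEven f) ∨ (p = 1 ∧ IsOdd f)

/-- `f` has smooth coefficients. -/
def Smooth (f : SF) : Prop := ContDiff ℝ (⊤ : ℕ∞) f.1 ∧ ContDiff ℝ (⊤ : ℕ∞) f.2

/-- The contact vector field `X_f = -f D̄² + (1/2) D(f) D̄` with contact Hamiltonian `f`. -/
noncomputable def Xop (f : SF) (g : SF) : SF :=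
  mul (-f) (Dbar (Dbar g)) + ((1:ℂ)/2) • mul (Dop f) (Dbar g)

/-- The action `L^λ_{X_f} = X_f + λ f′` on `λ`-densities. -/
noncomputable def Lden (lam : ℂ) (f : SF) (g : SF) : SF :=
  Xop f g + lam • mul (dx f) g

/-- The contact bracket `{f,g} = fg′ - f′g + (-1)^{p(f)(p(g)+1)} (1/2) D(f)D(g)`
for `f` of parity `pf` and `g` of parity `pg`. -/
noncomputable def cbr (pf pg : ℕ) (f g : SF) : SF :=
  mul f (dx g) - mul (dx f) g + ((-1:ℂ)^(pf*(pg+1)) * ((1:ℂ)/2)) • mul (Dop f) (Dop g)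

end SF

open SF

section helpers
variable (u v : ℝ → ℂ)

lemma negfun : (fun x => -deriv u x) = -deriv u := rfl
lemma etafun : (fun x => deriv u x) = deriv u := rfl

lemma dmul (hu : Differentiable ℝ u) (hv : Differentiable ℝ v) :
    deriv (u * v) = deriv u * v + u * deriv v := by
  funext x
  exact deriv_mul (hu x) (hv x)

lemma dadd (hu : Differentiable ℝ u) (hv : Differentiable ℝ v) :
    deriv (u + v) = deriv u + deriv v := by
  funext x
  exact deriv_add (hu x) (hv x)

lemma dzero : deriv (0 : ℝ → ℂ) = 0 := by
  funext x
  change deriv (fun _ => (0:ℂ)) x = 0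
  simp

lemma zerofun : (fun _ : ℝ => (0:ℂ)) = 0 := rfl

lemma dzero' (x : ℝ) : deriv (0 : ℝ → ℂ) x = 0 := by
  change deriv (fun _ => (0:ℂ)) x = 0
  simp

lemma dsub (hu : Differentiable ℝ u) (hv : Differentiable ℝ v) :
    deriv (u - v) = deriv u - deriv v := by
  funext x
  exact deriv_sub (hu x) (hv x)

lemma dneg : deriv (-u) = -deriv u := funext fun x => deriv.neg

lemma dsmul (c : ℂ) (hu : Differentiable ℝ u) : deriv (c • u) = c • deriv u := by
  funext x
  exact deriv_const_smul c (hu x)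

lemma smooth_deriv {u : ℝ → ℂ} (hu : ContDiff ℝ (⊤ : ℕ∞) u) : ContDiff ℝ (⊤ : ℕ∞) (deriv u) := by
  have h1 : ContDiff ℝ (((⊤ : ℕ∞) : WithTop ℕ∞) + 1) u := by
    exact hu.of_le (le_of_eq (by norm_cast))
  exact (contDiff_succ_iff_deriv.mp h1).2.2

end helpers


set_option maxHeartbeats 4000000 in
/-- `[X_f, X_g] = X_{{f,g}}` for homogeneous superfunctions `f, g`. -/
theorem contact_bracket_homomorphism (f g : SF) (pf pg : ℕ)
    (hf : Homog f pf) (hg : Homog g pg) (hfs : Smooth f) (hgs : Smooth g)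
    (h : SF) (hhs : Smooth h) :
    Xop f (Xop g h) - (-1:ℂ)^(pf*pg) • Xop g (Xop f h) = Xop (cbr pf pg f g) h := by
  obtain ⟨ha1, ha2⟩ := hfs
  obtain ⟨hb1, hb2⟩ := hgs
  obtain ⟨hu1, hu2⟩ := hhs
  have Da1 : Differentiable ℝ f.1 := ha1.differentiable (by simp)
  have Da2 : Differentiable ℝ f.2 := ha2.differentiable (by simp)
  have Db1 : Differentiable ℝ g.1 := hb1.differentiable (by simp)
  have Db2 : Differentiable ℝ g.2 := hb2.differentiable (by simp)
  have Du1 : Differentiable ℝ h.1 := hu1.differentiable (by simp)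
  have Du2 : Differentiable ℝ h.2 := hu2.differentiable (by simp)
  have Da1' : Differentiable ℝ (deriv f.1) := (smooth_deriv ha1).differentiable (by simp)
  have Da2' : Differentiable ℝ (deriv f.2) := (smooth_deriv ha2).differentiable (by simp)
  have Db1' : Differentiable ℝ (deriv g.1) := (smooth_deriv hb1).differentiable (by simp)
  have Db2' : Differentiable ℝ (deriv g.2) := (smooth_deriv hb2).differentiable (by simp)
  have Du1' : Differentiable ℝ (deriv h.1) := (smooth_deriv hu1).differentiable (by simp)
  have Du2' : Differentiable ℝ (deriv h.2) := (smooth_deriv hu2).differentiable (by simp)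
  have Du1'' : Differentiable ℝ (deriv (deriv h.1)) :=
    (smooth_deriv (smooth_deriv hu1)).differentiable (by simp)
  have Du2'' : Differentiable ℝ (deriv (deriv h.2)) :=
    (smooth_deriv (smooth_deriv hu2)).differentiable (by simp)
  obtain ⟨hp, hfe⟩ | ⟨hp, hfe⟩ := hf <;> obtain ⟨hq, hge⟩ | ⟨hq, hge⟩ := hg <;>
    subst hp <;> subst hq <;>
    simp only [IsEven, IsOdd] at hfe hge <;>
    ext x <;>
    simp (disch := with_unfolding_all (repeat' first | assumption | exact differentiable_const _ | apply Differentiable.add | apply Differentiable.const_smul | apply Differentiable.neg | apply Differentiable.mul)) only [Xop, cbr, mul, Dbar, Dop, dx, hfe, hge, negfun, etafun, zerofun,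
      dmul, dadd, dneg, dsmul, Pi.zero_apply, zero_mul, mul_zero, smul_zero, zero_add, add_zero,
      neg_zero, neg_neg, neg_mul, mul_neg, dzero, dzero', dsub, deriv_const,
      Prod.fst_add, Prod.snd_add, Prod.fst_neg, Prod.snd_neg, Prod.smul_fst,
      Prod.smul_snd, Prod.fst_sub, Prod.snd_sub, Pi.add_apply, Pi.mul_apply, Pi.neg_apply,
      Pi.smul_apply, Pi.sub_apply, smul_eq_mul, Prod.fst_zero, Prod.snd_zero, Nat.reduceMul, Nat.reduceAdd, pow_zero, pow_one, neg_one_sq, one_mul]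
  all_goals try ring
  rw [show deriv (((1:ℂ)/2) • (f.2 * g.2)) = ((1:ℂ)/2) • (deriv f.2 * g.2 + f.2 * deriv g.2) by
    rw [dsmul (f.2*g.2) ((1:ℂ)/2) (Da2.mul Db2), dmul f.2 g.2 Da2 Db2]]
  simp only [Pi.smul_apply, Pi.add_apply, Pi.mul_apply, smul_eq_mul]
  ring
end

section
/- For λ ∈ ℂ define L^λ_{X_f} = X_f + λ f′ (the operator X_f plus multiplication by λ f′). Then the map f ↦ L^λ_{X_f} is a homomorphism of Lie superalgebras from superfunctions with the contact bracket to operators with the supercommutator: [L^λ_{X_f}, L^λ_{X_g}] = L^λ_{X_{{f,g}}} for all homogeneous f, g and all λ. -/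
open SF

set_option maxHeartbeats 2000000

lemma SF.Lden_eq (lam : ℂ) (f h : SF) :
    Lden lam f h = (fun x => f.1 x * deriv h.1 x + (1/2) * (f.2 x * h.2 x) + lam * (deriv f.1 x * h.1 x),
      fun x => f.1 x * deriv h.2 x + (1/2) * (f.2 x * deriv h.1 x) + ((1/2)+lam) * (deriv f.1 x * h.2 x) + lam * (deriv f.2 x * h.1 x)) := by
  refine Prod.ext ?_ ?_ <;> funext x <;>
    simp [Lden, Xop, Dbar, Dop, dx, mul] <;> ring

lemma SF.cbr_eq (pf pg : ℕ) (f g : SF) :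
    cbr pf pg f g = (fun x => f.1 x * deriv g.1 x - deriv f.1 x * g.1 x + ((-1:ℂ)^(pf*(pg+1)) * (1/2)) * (f.2 x * g.2 x),
      fun x => f.1 x * deriv g.2 x + f.2 x * deriv g.1 x - deriv f.1 x * g.2 x - deriv f.2 x * g.1 x + ((-1:ℂ)^(pf*(pg+1)) * (1/2)) * (f.2 x * deriv g.1 x + deriv f.1 x * g.2 x)) := by
  refine Prod.ext ?_ ?_ <;> funext x <;>
    simp [cbr, Dop, dx, mul] <;> ring


/-- `f ↦ L^λ_{X_f}` is a Lie superalgebra homomorphism: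
`[L^λ_{X_f}, L^λ_{X_g}] = L^λ_{X_{{f,g}}}`. -/
theorem density_action_homomorphism (lam : ℂ) (f g : SF) (pf pg : ℕ)
    (hf : Homog f pf) (hg : Homog g pg) (hfs : Smooth f) (hgs : Smooth g)
    (h : SF) (hhs : Smooth h) :
    Lden lam f (Lden lam g h) - (-1:ℂ)^(pf*pg) • Lden lam g (Lden lam f h)
      = Lden lam (cbr pf pg f g) h := by
  obtain ⟨hf1, hf1'⟩ := contDiff_infty_iff_deriv.mp (hfs.1.of_le (by simp))
  obtain ⟨hf2, hf2'⟩ := contDiff_infty_iff_deriv.mp (hfs.2.of_le (by simp))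
  obtain ⟨hg1, hg1'⟩ := contDiff_infty_iff_deriv.mp (hgs.1.of_le (by simp))
  obtain ⟨hg2, hg2'⟩ := contDiff_infty_iff_deriv.mp (hgs.2.of_le (by simp))
  obtain ⟨hh1, hh1'⟩ := contDiff_infty_iff_deriv.mp (hhs.1.of_le (by simp))
  obtain ⟨hh2, hh2'⟩ := contDiff_infty_iff_deriv.mp (hhs.2.of_le (by simp))
  have hf1' := hf1'.differentiable (by simp)
  have hf2' := hf2'.differentiable (by simp)
  have hg1' := hg1'.differentiable (by simp)
  have hg2' := hg2'.differentiable (by simp)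
  have hh1' := hh1'.differentiable (by simp)
  have hh2' := hh2'.differentiable (by simp)
  have dz : deriv (0 : ℝ → ℂ) = 0 := by
    funext x; exact deriv_const x 0
  rcases hf with ⟨rfl, hf'⟩ | ⟨rfl, hf'⟩ <;> rcases hg with ⟨rfl, hg'⟩ | ⟨rfl, hg'⟩ <;>
    simp only [IsEven, IsOdd] at hf' hg' <;>
  · rw [cbr_eq]
    simp only [Lden_eq]
    simp only [hf', hg', dz, Pi.zero_apply, mul_zero, zero_mul, add_zero, zero_add,
      sub_zero, zero_sub, mul_one, one_mul]
    refine Prod.ext ?_ ?_ <;> funext x <;>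
      simp only [Prod.fst_sub, Prod.snd_sub, Prod.smul_fst, Prod.smul_snd, Pi.sub_apply,
        Pi.smul_apply, smul_eq_mul] <;>
      simp (disch := fun_prop) only [deriv_fun_add, deriv_fun_mul, deriv_const_mul, deriv_fun_sub] <;>
      norm_num <;> ring
end
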